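/- Let r, d, m ≥ 1 and let A = {(M_j, b_j)}_{j=1}^m with M_j ∈ ℂ^{d×r} and b_j ∈ ℂ^r. For each j define the (d+1)×(d+1) Hermitian matrix A_j with block form A_j = [[M_j M_j*, M_j b_j], [(M_j b_j)*, b_j* b_j]]. Then A does NOT have the generalized affine phase retrieval property for ℂ^d if and only if there exists a matrix Q ∈ ℂ^{(d+1)×(d+1)} satisfying: Q* = Q, Q_{d+1,d+1} = 0, rank(Q) ≤ 2, tr(A_j* Q) = 0 for all j = 1, …, m, and Q_{1,d+1}·Q_{d+1,1} + Q_{2,d+1}·Q_{d+1,2} + ⋯ + Q_{d,d+1}·Q_{d+1,d} = 1. -/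

import Mathlib

/-!
Lift `x ∈ ℂ^d` to `z_x = (x, 1) ∈ ℂ^{d+1}`. Since `A_j = N_j N_jᴴ` with `N_j` the matrix `M_j`
with the row `b_jᴴ` appended, and `N_jᴴ z_x = M_jᴴ x + b_j`, the `j`-th measurement of `x` is
`tr (A_j z_x z_xᴴ)`. If `x ≠ y` have the same measurements, then `Q = t (z_x z_xᴴ - z_y z_yᴴ)`
works, with `t > 0` normalising the last column, which is `t (x - y, 0)`.
Conversely, the spectral theorem writes a Hermitian `Q` of rank at most two as
`α w₁ w₁ᴴ + β w₂ w₂ᴴ`; the vanishing corner and the nonzero last column force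
`α |w₁ₗ|² = -β |w₂ₗ|² ≠ 0`, so rescaling the `wᵢ` gives `Q = t (z_x z_xᴴ - z_y z_yᴴ)` with
`t ≠ 0`. The trace conditions then say that `x` and `y` have the same measurements, and
injectivity forces `x = y`, i.e. `Q = 0`, contradicting the normalisation of the last column.
-/

open Matrix

/-- The `(d+1)×(d+1)` Hermitian matrix
`A = [[M M*, M b], [(M b)*, b* b]]` associated with `(M, b) ∈ ℂ^{d×r} × ℂ^r`. -/
noncomputable def affineMeasMatrixC (d r : ℕ) (M : Matrix (Fin d) (Fin r) ℂ) (b : Fin r → ℂ) :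
    Matrix (Fin (d + 1)) (Fin (d + 1)) ℂ :=
  Matrix.of fun i k =>
    if hi : (i : ℕ) < d then
      if hk : (k : ℕ) < d then (M * Mᴴ) ⟨i, hi⟩ ⟨k, hk⟩
      else M.mulVec b ⟨i, hi⟩
    else
      if hk : (k : ℕ) < d then star (M.mulVec b ⟨k, hk⟩)
      else star b ⬝ᵥ b

theorem RCLike.ofReal_mul_star_eq_zero_of_mul_norm_sq_eq_zero {𝕜 : Type*} [RCLike 𝕜] {γ : ℝ} {z : 𝕜}
    (h : γ * ‖z‖ ^ 2 = 0) : (γ : 𝕜) * star z = 0 := by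
  rcases mul_eq_zero.mp h with h | h
  · simp [h]
  · simp [norm_eq_zero.mp (pow_eq_zero_iff two_ne_zero |>.mp h)]

namespace Matrix

theorem rank_add_le {K m n : Type*} [Field K] [Fintype m] [Fintype n] (A B : Matrix m n K) :
    (A + B).rank ≤ A.rank + B.rank := by
  rw [rank, rank, rank, mulVecLin_add]
  exact (Submodule.finrank_mono (LinearMap.range_add_le _ _)).trans
    (Submodule.finrank_add_le_finrank_add_finrank _ _)

theorem rank_smul_vecMulVec_sub_le {K n : Type*} [Field K] [Fintype n] (c : K)
    (u v w z : n → K) : (c • (vecMulVec u w - vecMulVec v z)).rank ≤ 2 := by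
  rw [smul_sub, ← smul_vecMulVec, ← smul_vecMulVec, sub_eq_add_neg, ← neg_vecMulVec]
  exact (rank_add_le _ _).trans (add_le_add (rank_vecMulVec_le _ _) (rank_vecMulVec_le _ _))

theorem trace_mul_vecMulVec {R n : Type*} [CommSemiring R] [Fintype n]
    (A : Matrix n n R) (u v : n → R) : trace (A * vecMulVec u v) = v ⬝ᵥ A *ᵥ u := by
  rw [mul_vecMulVec, trace_vecMulVec, dotProduct_comm]

theorem vecMulVec_smul_star_smul {R n : Type*} [CommRing R] [StarRing R] (c : R)
    (w : n → R) : vecMulVec (c • w) (star (c • w)) = (c * star c) • vecMulVec w (star w) := by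
  ext i j
  simp only [vecMulVec_apply, Pi.smul_apply, Pi.star_apply, star_smul, smul_apply, smul_eq_mul]
  ring

variable {𝕜 n : Type*} [RCLike 𝕜]

theorem star_dotProduct_self_eq_sum_norm_sq [Fintype n] (w : n → 𝕜) :
    star w ⬝ᵥ w = ((∑ i, ‖w i‖ ^ 2 : ℝ) : 𝕜) := by
  simp [dotProduct, RCLike.conj_mul]

theorem isHermitian_smul_vecMulVec_sub (t : ℝ) (u v : n → 𝕜) :
    ((t : 𝕜) • (vecMulVec u (star u) - vecMulVec v (star v))).IsHermitian := by
  refine IsHermitian.smul ?_ (RCLike.conj_ofReal t)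
  simp [IsHermitian]

theorem IsHermitian.eq_sum_smul_vecMulVec [Fintype n] [DecidableEq n] {A : Matrix n n 𝕜}
    (hA : A.IsHermitian) :
    A = ∑ j, (hA.eigenvalues j : 𝕜) •
      vecMulVec (hA.eigenvectorBasis j) (star ⇑(hA.eigenvectorBasis j)) := by
  conv_lhs => rw [hA.spectral_theorem, Unitary.conjStarAlgAut_apply]
  ext i k
  simp only [mul_apply, diagonal_apply, Matrix.sum_apply, smul_apply, vecMulVec_apply,
    mul_ite, mul_zero, Finset.sum_ite_eq', Finset.mem_univ, if_true]
  refine Finset.sum_congr rfl fun j _ => ?_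
  simp only [eigenvectorUnitary_apply, Function.comp_apply, star_apply, Pi.star_apply,
    smul_eq_mul]
  ring

theorem IsHermitian.exists_eq_smul_vecMulVec_add_smul_vecMulVec_of_rank_le_two
    [Fintype n] [DecidableEq n] {A : Matrix n n 𝕜} (hA : A.IsHermitian) (hrank : A.rank ≤ 2) :
    ∃ (α β : ℝ) (w₁ w₂ : n → 𝕜),
      A = (α : 𝕜) • vecMulVec w₁ (star w₁) + (β : 𝕜) • vecMulVec w₂ (star w₂) := by
  set f : n → Matrix n n 𝕜 := fun j => (hA.eigenvalues j : 𝕜) •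
      vecMulVec (hA.eigenvectorBasis j) (star ⇑(hA.eigenvectorBasis j))
  set s := Finset.univ.filter fun j => hA.eigenvalues j ≠ 0
  have hsum : A = ∑ j ∈ s, f j := by
    rw [Finset.sum_filter_of_ne fun j _ hj => ?_]
    · exact hA.eq_sum_smul_vecMulVec
    · intro h
      simp [f, h] at hj
  have hcard : s.card ≤ 2 := by
    rwa [hA.rank_eq_card_non_zero_eigs, Fintype.card_subtype] at hrank
  interval_cases h : s.card
  · exact ⟨0, 0, 0, 0, hsum.trans (by simp [Finset.card_eq_zero.mp h])⟩
  · obtain ⟨j, hj⟩ := Finset.card_eq_one.mp h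
    exact ⟨hA.eigenvalues j, 0, hA.eigenvectorBasis j, 0, hsum.trans (by
      rw [hj, Finset.sum_singleton, RCLike.ofReal_zero, zero_smul, add_zero])⟩
  · obtain ⟨j, k, hjk, hs⟩ := Finset.card_eq_two.mp h
    exact ⟨_, _, _, _, hsum.trans (by rw [hs, Finset.sum_pair hjk])⟩

theorem exists_eq_smul_sub_vecMulVec_of_apply_self_eq_zero {α β : ℝ} {w₁ w₂ : n → 𝕜} {i l : n}
    (hll : ((α : 𝕜) • vecMulVec w₁ (star w₁) + (β : 𝕜) • vecMulVec w₂ (star w₂)) l l = 0)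
    (hil : ((α : 𝕜) • vecMulVec w₁ (star w₁) + (β : 𝕜) • vecMulVec w₂ (star w₂)) i l ≠ 0) :
    ∃ (t : ℝ) (u v : n → 𝕜), t ≠ 0 ∧ u l = 1 ∧ v l = 1 ∧
      (α : 𝕜) • vecMulVec w₁ (star w₁) + (β : 𝕜) • vecMulVec w₂ (star w₂)
        = (t : 𝕜) • (vecMulVec u (star u) - vecMulVec v (star v)) := by
  set p := w₁ l
  set q := w₂ l
  have hcorner : α * ‖p‖ ^ 2 + β * ‖q‖ ^ 2 = 0 := by
    simp only [add_apply, smul_apply, vecMulVec_apply, Pi.star_apply, RCLike.star_def,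
      RCLike.mul_conj, smul_eq_mul] at hll
    exact_mod_cast hll
  have ht : α * ‖p‖ ^ 2 ≠ 0 := by
    intro h
    apply hil
    simp only [add_apply, smul_apply, vecMulVec_apply, Pi.star_apply, smul_eq_mul]
    linear_combination w₁ i * RCLike.ofReal_mul_star_eq_zero_of_mul_norm_sq_eq_zero h
      + w₂ i * RCLike.ofReal_mul_star_eq_zero_of_mul_norm_sq_eq_zero (by linarith : β * ‖q‖ ^ 2 = 0)
  have hp : p ≠ 0 := by
    rintro h
    simp [h] at ht
  have hq : q ≠ 0 := by
    rintro h
    rw [h, norm_zero, zero_pow two_ne_zero, mul_zero, add_zero] at hcorner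
    exact ht hcorner
  refine ⟨α * ‖p‖ ^ 2, p⁻¹ • w₁, q⁻¹ • w₂, ht, inv_mul_cancel₀ hp, inv_mul_cancel₀ hq, ?_⟩
  have hβ : α * ‖p‖ ^ 2 = -β * ‖q‖ ^ 2 := by linarith
  rw [smul_sub, vecMulVec_smul_star_smul, vecMulVec_smul_star_smul, smul_smul, smul_smul,
    sub_eq_add_neg, ← neg_smul]
  congr 2
  · have : starRingEnd 𝕜 p ≠ 0 := by simpa using hp
    push_cast
    rw [← RCLike.mul_conj, RCLike.star_def, map_inv₀]
    field_simp
  · have : starRingEnd 𝕜 q ≠ 0 := by simpa using hq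
    rw [hβ]
    push_cast
    rw [← RCLike.mul_conj, RCLike.star_def, map_inv₀]
    field_simp

end Matrix

section Lift

variable {d : ℕ}

def affineLift (x : Fin d → ℂ) : Fin (d + 1) → ℂ := Fin.snoc x 1

@[simp] theorem affineLift_castSucc (x : Fin d → ℂ) (i : Fin d) :
    affineLift x i.castSucc = x i :=
  Fin.snoc_castSucc _ _ _

@[simp] theorem affineLift_last (x : Fin d → ℂ) : affineLift x (Fin.last d) = 1 :=
  Fin.snoc_last _ _

theorem exists_affineLift_eq {u : Fin (d + 1) → ℂ} (hu : u (Fin.last d) = 1) :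
    ∃ x, affineLift x = u :=
  ⟨Fin.init u, by rw [affineLift, ← hu, Fin.snoc_init_self]⟩

noncomputable def liftedGramDiff (t : ℝ) (x y : Fin d → ℂ) :
    Matrix (Fin (d + 1)) (Fin (d + 1)) ℂ :=
  (t : ℂ) • (vecMulVec (affineLift x) (star (affineLift x))
    - vecMulVec (affineLift y) (star (affineLift y)))

variable (t : ℝ) (x y : Fin d → ℂ)

theorem liftedGramDiff_castSucc_last (i : Fin d) :
    liftedGramDiff t x y i.castSucc (Fin.last d) = t * (x i - y i) := by
  simp [liftedGramDiff, vecMulVec_apply]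

theorem liftedGramDiff_last_last : liftedGramDiff t x y (Fin.last d) (Fin.last d) = 0 := by
  simp [liftedGramDiff, vecMulVec_apply]

theorem sum_liftedGramDiff_castSucc_last_mul_last_castSucc :
    ∑ i : Fin d, liftedGramDiff t x y i.castSucc (Fin.last d)
        * liftedGramDiff t x y (Fin.last d) i.castSucc
      = ((t ^ 2 * ∑ i, ‖x i - y i‖ ^ 2 : ℝ) : ℂ) := by
  push_cast
  rw [Finset.mul_sum]
  refine Finset.sum_congr rfl fun i _ => ?_
  simp only [liftedGramDiff, Matrix.smul_apply, Matrix.sub_apply, vecMulVec_apply,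
    Pi.star_apply, affineLift_castSucc, affineLift_last, star_one, mul_one, one_mul,
    smul_eq_mul, RCLike.star_def]
  rw [← Complex.conj_mul', map_sub]
  ring

end Lift

section Affine

variable {d r : ℕ} (M : Matrix (Fin d) (Fin r) ℂ) (b : Fin r → ℂ)

noncomputable def affineFactor : Matrix (Fin (d + 1)) (Fin r) ℂ :=
  Matrix.of (Fin.snoc (α := fun _ => Fin r → ℂ) M (star b))

@[simp] theorem affineFactor_castSucc (i : Fin d) : affineFactor M b i.castSucc = M i :=
  Fin.snoc_castSucc (α := fun _ => Fin r → ℂ) _ _ _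

@[simp] theorem affineFactor_last : affineFactor M b (Fin.last d) = star b :=
  Fin.snoc_last (α := fun _ => Fin r → ℂ) _ _

theorem affineMeasMatrixC_eq_mul_conjTranspose :
    affineMeasMatrixC d r M b = affineFactor M b * (affineFactor M b)ᴴ := by
  ext i k
  induction i using Fin.lastCases <;> induction k using Fin.lastCases <;>
    simp [affineMeasMatrixC, mul_apply, mulVec, dotProduct, mul_comm]

theorem conjTranspose_affineFactor_mulVec_affineLift (x : Fin d → ℂ) :
    (affineFactor M b)ᴴ *ᵥ affineLift x = Mᴴ *ᵥ x + b := by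
  ext k
  simp [mulVec, dotProduct, Fin.sum_univ_castSucc]

theorem trace_affineMeasMatrixC_mul_vecMulVec_affineLift (x : Fin d → ℂ) :
    trace ((affineMeasMatrixC d r M b)ᴴ * vecMulVec (affineLift x) (star (affineLift x)))
      = ((∑ i, ‖(Mᴴ *ᵥ x + b) i‖ ^ 2 : ℝ) : ℂ) := by
  rw [affineMeasMatrixC_eq_mul_conjTranspose, conjTranspose_mul, conjTranspose_conjTranspose,
    trace_mul_vecMulVec, ← mulVec_mulVec, dotProduct_mulVec,
    ← conjTranspose_conjTranspose (affineFactor M b), ← star_mulVec, conjTranspose_conjTranspose,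
    conjTranspose_affineFactor_mulVec_affineLift, star_dotProduct_self_eq_sum_norm_sq,
    RCLike.ofReal_eq_complex_ofReal]

theorem trace_affineMeasMatrixC_mul_liftedGramDiff (t : ℝ) (x y : Fin d → ℂ) :
    trace ((affineMeasMatrixC d r M b)ᴴ * liftedGramDiff t x y)
      = t * (((∑ i, ‖(Mᴴ *ᵥ x + b) i‖ ^ 2 : ℝ) : ℂ) - ((∑ i, ‖(Mᴴ *ᵥ y + b) i‖ ^ 2 : ℝ) : ℂ)) := by
  rw [liftedGramDiff, mul_smul_comm, mul_sub, trace_smul, trace_sub,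
    trace_affineMeasMatrixC_mul_vecMulVec_affineLift,
    trace_affineMeasMatrixC_mul_vecMulVec_affineLift, smul_eq_mul]

end Affine

theorem gapr_fail_iff_exists_Q_complex_general
    (r d m : ℕ)
    (M : Fin m → Matrix (Fin d) (Fin r) ℂ) (b : Fin m → Fin r → ℂ) :
    ¬ Function.Injective (fun x : Fin d → ℂ => fun j : Fin m =>
        ∑ i : Fin r, ‖((M j)ᴴ.mulVec x + b j) i‖ ^ 2)
    ↔ ∃ Q : Matrix (Fin (d + 1)) (Fin (d + 1)) ℂ,
        Qᴴ = Q ∧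
        Q (Fin.last d) (Fin.last d) = 0 ∧
        Q.rank ≤ 2 ∧
        (∀ j : Fin m, ((affineMeasMatrixC d r (M j) (b j))ᴴ * Q).trace = 0) ∧
        ∑ i : Fin d, Q i.castSucc (Fin.last d) * Q (Fin.last d) i.castSucc = 1 := by
  constructor
  · intro hni
    obtain ⟨x, y, hmeas, hne⟩ := Function.not_injective_iff.mp hni
    set N := ‖WithLp.toLp 2 (x - y)‖
    have hN : N ^ 2 = ∑ i, ‖x i - y i‖ ^ 2 := by simp [N, EuclideanSpace.norm_sq_eq]
    have hN0 : N ≠ 0 := by simpa [N, sub_eq_zero] using hne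
    refine ⟨liftedGramDiff N⁻¹ x y, isHermitian_smul_vecMulVec_sub _ _ _,
      liftedGramDiff_last_last _ x y, rank_smul_vecMulVec_sub_le _ _ _ _ _, fun j => ?_, ?_⟩
    · rw [trace_affineMeasMatrixC_mul_liftedGramDiff, congrFun hmeas j, sub_self, mul_zero]
    · rw [sum_liftedGramDiff_castSucc_last_mul_last_castSucc, ← hN, inv_pow,
        inv_mul_cancel₀ (pow_ne_zero 2 hN0), Complex.ofReal_one]
  · rintro ⟨Q, hQ, hll, hrank, htr, hsum⟩ hinj
    obtain ⟨i, hi⟩ : ∃ i : Fin d, Q i.castSucc (Fin.last d) ≠ 0 := by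
      by_contra! h
      simp [h] at hsum
    obtain ⟨α, β, w₁, w₂, rfl⟩ :=
      IsHermitian.exists_eq_smul_vecMulVec_add_smul_vecMulVec_of_rank_le_two hQ hrank
    obtain ⟨t, u, v, ht, hu, hv, hQ⟩ := exists_eq_smul_sub_vecMulVec_of_apply_self_eq_zero hll hi
    obtain ⟨x, rfl⟩ := exists_affineLift_eq hu
    obtain ⟨y, rfl⟩ := exists_affineLift_eq hv
    change _ = liftedGramDiff t x y at hQ
    have hxy : x = y := hinj <| funext fun j => by
      have h := htr j
      rw [hQ, trace_affineMeasMatrixC_mul_liftedGramDiff, mul_eq_zero, sub_eq_zero] at h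
      exact_mod_cast h.resolve_left (by exact_mod_cast ht)
    rw [hQ, liftedGramDiff_castSucc_last, hxy, sub_self, mul_zero] at hi
    exact hi rfl

/-- `A = {(M_j, b_j)}_{j=1}^m` fails the generalized affine phase
retrieval property for ℂ^d iff there exists `Q ∈ ℂ^{(d+1)×(d+1)}` with `Q* = Q`,
`Q_{d+1,d+1} = 0`, `rank Q ≤ 2`, `tr(A_j* Q) = 0` for all `j`, and
`Q_{1,d+1}·Q_{d+1,1} + ⋯ + Q_{d,d+1}·Q_{d+1,d} = 1`. -/
theorem gapr_fail_iff_exists_Q_complex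
    (r d m : ℕ) (hr : 1 ≤ r) (hd : 1 ≤ d) (hm : 1 ≤ m)
    (M : Fin m → Matrix (Fin d) (Fin r) ℂ) (b : Fin m → Fin r → ℂ) :
    ¬ Function.Injective (fun x : Fin d → ℂ => fun j : Fin m =>
        ∑ i : Fin r, ‖((M j)ᴴ.mulVec x + b j) i‖ ^ 2)
    ↔ ∃ Q : Matrix (Fin (d + 1)) (Fin (d + 1)) ℂ,
        Qᴴ = Q ∧
        Q (Fin.last d) (Fin.last d) = 0 ∧
        Q.rank ≤ 2 ∧
        (∀ j : Fin m, ((affineMeasMatrixC d r (M j) (b j))ᴴ * Q).trace = 0) ∧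
        ∑ i : Fin d, Q i.castSucc (Fin.last d) * Q (Fin.last d) i.castSucc = 1 :=
  gapr_fail_iff_exists_Q_complex_general r d m M b
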